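/- arXiv:2010.02388 — 2 statements merged into one kernel-verified Lean document; each statement's English description precedes it below -/
import Mathlib

section
/- Let G be a graph and π a layout of G of width lw(G). Define X_i = mid(π_{≤ i−1}) ∪ π(i) for 1 ≤ i ≤ m, where π(i) is interpreted as its set of endpoints. Then the sequence (X_1, …, X_m) is a path decomposition of G. -/
variable {V : Type*} [Fintype V] [DecidableEq V]

/-- `Vs F` is the set of endpoints of edges in `F`. -/
def Vs (F : Finset (Sym2 V)) : Finset V :=
  Finset.univ.filter (fun v => ∃ e ∈ F, v ∈ e)

/-- The set of endpoints of a single edge. -/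
def eset (e : Sym2 V) : Finset V := Finset.univ.filter (fun v => v ∈ e)

/-- `mids E F` is mid(F) = V(F) ∩ V(E \ F), relative to the edge set `E`. -/
def mids (E F : Finset (Sym2 V)) : Finset V := Vs F ∩ Vs (E \ F)

/-- `dd E F` is d(F) = |mid(F)|, relative to the edge set `E`. -/
def dd (E F : Finset (Sym2 V)) : ℕ := (mids E F).card

/-- A layout of the edge set `E`: a duplicate-free list enumerating `E`
(equivalently, a bijection {1,…,m} → E). -/
def IsLayout (E : Finset (Sym2 V)) (L : List (Sym2 V)) : Prop :=
  L.Nodup ∧ L.toFinset = E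

/-- The (partial) layout `L` has width at most `k` w.r.t. the edge set `E`:
every prefix `π_{≤ i}` satisfies d(π_{≤ i}) ≤ k. -/
def WidthLE (E : Finset (Sym2 V)) (L : List (Sym2 V)) (k : ℕ) : Prop :=
  ∀ i, dd E (L.take i).toFinset ≤ k

/-- The linearwidth of the edge set `E`: the minimum width of a layout of `E`. -/
noncomputable def lw (E : Finset (Sym2 V)) : ℕ :=
  sInf {k | ∃ L, IsLayout E L ∧ WidthLE E L k}

/-- The number of edges of `S` incident to `u`. -/
def degIn (S : Finset (Sym2 V)) (u : V) : ℕ := (S.filter (fun e => u ∈ e)).card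

/-- `X` is a path decomposition of `G`, given as a list of bags. -/
def IsPD (G : SimpleGraph V) (X : List (Finset V)) : Prop :=
  (∀ v : V, ∃ B ∈ X, v ∈ B) ∧
  (∀ e ∈ G.edgeSet, ∃ B ∈ X, eset e ⊆ B) ∧
  (∀ v : V, ∀ i j l : ℕ, i ≤ j → j ≤ l → l < X.length →
    v ∈ X.getD i ∅ → v ∈ X.getD l ∅ → v ∈ X.getD j ∅)

/-- The pathwidth of `G`: the minimum over path decompositions of (max bag size) − 1. -/
noncomputable def pw (G : SimpleGraph V) : ℕ :=
  sInf {k | ∃ X, IsPD G X ∧ ∀ B ∈ X, B.card ≤ k + 1}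

/-- The closure F* of `F` in `E`: all edges of `E` with both endpoints in `V(F)`. -/
def cl (E F : Finset (Sym2 V)) : Finset (Sym2 V) := E.filter (fun e => eset e ⊆ Vs F)

/-- A partial layout `S` is `k`-extendable: it is a prefix of some layout
of `E` of width at most `k`. -/
def Extendable (E : Finset (Sym2 V)) (k : ℕ) (S : List (Sym2 V)) : Prop :=
  ∃ L, IsLayout E L ∧ WidthLE E L k ∧ S <+: L

/-
For a duplicate-free layout, the `j`-th bag `mid(π_{<j}) ∪ π(j)` is exactly the set of vertices
incident both to an edge at a position `≤ j` and to an edge at a position `≥ j`; for a fixed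
vertex these positions form an interval. Every edge lies in its own bag, and since there are no
isolated vertices, every vertex lies in the bag of one of its edges.
-/

@[simp]
lemma mem_Vs {F : Finset (Sym2 V)} {v : V} : v ∈ Vs F ↔ ∃ e ∈ F, v ∈ e := by
  simp [Vs]

@[simp]
lemma mem_eset {e : Sym2 V} {v : V} : v ∈ eset e ↔ v ∈ e := by
  simp [eset]

lemma List.Nodup.mem_drop_iff {α : Type*} {L : List α} (hL : L.Nodup) {j : ℕ} {a : α} :
    a ∈ L.drop j ↔ a ∈ L ∧ a ∉ L.take j := by
  refine ⟨fun h => ⟨List.mem_of_mem_drop h, fun h' => List.disjoint_take_drop hL le_rfl h' h⟩,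
    fun ⟨h, h'⟩ => ?_⟩
  rw [← L.take_append_drop j, List.mem_append] at h
  exact h.resolve_left h'

lemma mem_mids_take_union_eset_iff {L : List (Sym2 V)} (hL : L.Nodup) {j : ℕ}
    (hj : j < L.length) {v : V} :
    v ∈ mids L.toFinset (L.take j).toFinset ∪ eset L[j] ↔
      (∃ e ∈ L.take (j + 1), v ∈ e) ∧ ∃ e ∈ L.drop j, v ∈ e := by
  simp only [mids, Finset.mem_union, Finset.mem_inter, mem_Vs, mem_eset, Finset.mem_sdiff,
    List.mem_toFinset, ← hL.mem_drop_iff, ← L.take_concat_get' j hj, List.drop_eq_getElem_cons hj,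
    List.mem_append, List.mem_cons, List.not_mem_nil]
  grind

lemma exists_mem_of_forall_edge {G : SimpleGraph V} [DecidableRel G.Adj]
    (hiso : ∀ v : V, 0 < G.degree v) {X : List (Finset V)}
    (hX : ∀ e ∈ G.edgeSet, ∃ B ∈ X, eset e ⊆ B) (v : V) : ∃ B ∈ X, v ∈ B := by
  obtain ⟨u, hvu⟩ := G.degree_pos_iff_exists_adj v |>.mp (hiso v)
  obtain ⟨B, hB, hsub⟩ := hX s(v, u) hvu
  exact ⟨B, hB, hsub (by simp)⟩

def layoutBags (L : List (Sym2 V)) : List (Finset V) :=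
  List.ofFn fun i : Fin L.length => mids L.toFinset (L.take i).toFinset ∪ eset (L.get i)

lemma getD_layoutBags (L : List (Sym2 V)) {j : ℕ} (hj : j < L.length) :
    (layoutBags L).getD j ∅ = mids L.toFinset (L.take j).toFinset ∪ eset L[j] := by
  unfold layoutBags
  rw [List.getD_eq_getElem _ _ (by simpa using hj), List.getElem_ofFn]
  rfl

lemma isPD_layoutBags {G : SimpleGraph V} [DecidableRel G.Adj] (hiso : ∀ v : V, 0 < G.degree v)
    {L : List (Sym2 V)} (hL : IsLayout G.edgeFinset L) : IsPD G (layoutBags L) := by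
  have hedge : ∀ e ∈ G.edgeSet, ∃ B ∈ layoutBags L, eset e ⊆ B := by
    intro e he
    have heL : e ∈ L := by rw [← List.mem_toFinset, hL.2]; exact G.mem_edgeFinset.mpr he
    obtain ⟨j, hj, rfl⟩ := List.getElem_of_mem heL
    exact ⟨_, List.mem_ofFn.mpr ⟨⟨j, hj⟩, rfl⟩, Finset.subset_union_right⟩
  refine ⟨exists_mem_of_forall_edge hiso hedge, hedge, ?_⟩
  intro v i j l hij hjl hl hvi hvl
  replace hl : l < L.length := by simpa [layoutBags] using hl
  rw [getD_layoutBags L (by omega), mem_mids_take_union_eset_iff hL.1] at hvi hvl ⊢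
  obtain ⟨⟨e, he, hve⟩, -⟩ := hvi
  obtain ⟨-, ⟨f, hf, hvf⟩⟩ := hvl
  exact ⟨⟨e, L.take_subset_take_left (by omega) he, hve⟩, ⟨f, L.drop_subset_drop_left hjl hf, hvf⟩⟩

theorem stmt6_general (G : SimpleGraph V) [DecidableRel G.Adj]
    (hiso : ∀ v : V, 0 < G.degree v)
    (L : List (Sym2 V)) (hL : IsLayout G.edgeFinset L) :
    IsPD G (List.ofFn (fun i : Fin L.length =>
      mids G.edgeFinset (L.take i).toFinset ∪ eset (L.get i))) := by
  rw [← hL.2]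
  exact isPD_layoutBags hiso hL

/-- From an optimal layout π, the bags X_i = mid(π_{≤ i−1}) ∪ endpoints(π(i))
form a path decomposition of G (G has no isolated vertices). -/
theorem stmt6 (G : SimpleGraph V) [DecidableRel G.Adj]
    (hiso : ∀ v : V, 0 < G.degree v)
    (L : List (Sym2 V)) (hL : IsLayout G.edgeFinset L)
    (hw : WidthLE G.edgeFinset L (lw G.edgeFinset)) :
    IsPD G (List.ofFn (fun i : Fin L.length =>
      mids G.edgeFinset (L.take i).toFinset ∪ eset (L.get i))) :=
  stmt6_general G hiso L hL
end

section
/- Let π be a layout of G of width at most k, let j < j' ≤ m, set F = π_{≤ j} and e = π(j'). If d(F ∪ {e}) ≤ d(F), then the layout π' obtained from π by moving e forward to position j+1 (i.e., π' = π(1)⋯π(j), e, π(j+1)⋯π(j'−1), π(j'+1)⋯π(m)) also has width at most k. -/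
variable {V : Type*} [Fintype V] [DecidableEq V]

/-! Every prefix of the new layout is either a prefix of the old one, or `F' ∪ {e}` for an old
prefix `F' ⊇ F`. In the latter case submodularity of `d` gives
`d(F' ∪ {e}) - d(F') ≤ d(F ∪ {e}) - d(F) ≤ 0`. -/

theorem mem_mids {E F : Finset (Sym2 V)} {v : V} :
    v ∈ mids E F ↔ (∃ f ∈ F, v ∈ f) ∧ ∃ f ∈ E, f ∉ F ∧ v ∈ f := by
  simp [mids, Vs, and_assoc]

theorem card_add_card_le_of_union_subset_of_inter_subset {α : Type*} [DecidableEq α]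
    {A B C D : Finset α} (hu : A ∪ B ⊆ C ∪ D) (hi : A ∩ B ⊆ C ∩ D) :
    A.card + B.card ≤ C.card + D.card := by
  have := Finset.card_le_card hu
  have := Finset.card_le_card hi
  have := Finset.card_union_add_card_inter A B
  have := Finset.card_union_add_card_inter C D
  omega

theorem dd_insert_add_dd_le {E X P : Finset (Sym2 V)} {e : Sym2 V} (hPX : P ⊆ X)
    (heX : e ∉ X) : dd E (insert e X) + dd E P ≤ dd E X + dd E (insert e P) := by
  apply card_add_card_le_of_union_subset_of_inter_subset
  · intro v hv
    simp only [Finset.mem_union, mem_mids, Finset.mem_insert] at hv ⊢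
    grind
  · intro v hv
    simp only [Finset.mem_inter, mem_mids, Finset.mem_insert] at hv ⊢
    grind

theorem dd_insert_le_of_subset {E X P : Finset (Sym2 V)} {e : Sym2 V} (hPX : P ⊆ X)
    (hd : dd E (insert e P) ≤ dd E P) : dd E (insert e X) ≤ dd E X := by
  by_cases heX : e ∈ X
  · rw [Finset.insert_eq_of_mem heX]
  · have := dd_insert_add_dd_le (E := E) hPX heX
    omega

theorem List.toFinset_take_eq_or_eq_insert {α : Type*} [DecidableEq α] (P Q R : List α) (e : α)
    (i : ℕ) :
    (∃ j, ((P ++ e :: (Q ++ R)).take i).toFinset = ((P ++ Q ++ e :: R).take j).toFinset) ∨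
      ∃ j, P.toFinset ⊆ ((P ++ Q ++ e :: R).take j).toFinset ∧
        ((P ++ e :: (Q ++ R)).take i).toFinset = insert e ((P ++ Q ++ e :: R).take j).toFinset := by
  rcases le_or_gt i P.length with hi | hi
  · left
    refine ⟨i, ?_⟩
    rw [List.append_assoc, List.take_append_of_le_length hi, List.take_append_of_le_length hi]
  obtain ⟨s, rfl⟩ : ∃ s, i = P.length + (s + 1) := ⟨i - P.length - 1, by omega⟩
  rcases le_or_gt s Q.length with hs | hs
  · right
    refine ⟨P.length + s, ?_, ?_⟩
    · simp [List.append_assoc, List.take_length_add_append]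
    · simp [List.append_assoc, List.take_length_add_append, List.take_append_of_le_length hs]
  · left
    refine ⟨P.length + (s + 1), ?_⟩
    obtain ⟨r, rfl⟩ : ∃ r, s = Q.length + r := ⟨s - Q.length, by omega⟩
    rw [List.append_assoc, List.take_length_add_append, List.take_length_add_append,
      List.take_succ_cons, List.take_length_add_append, Nat.add_assoc,
      List.take_length_add_append]
    ext
    simp only [List.mem_toFinset, List.mem_append, List.mem_cons, List.take_succ_cons]
    tauto

theorem stmt13_general (E : Finset (Sym2 V)) (k : ℕ) (P Q R : List (Sym2 V)) (e : Sym2 V)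
    (hw : WidthLE E (P ++ Q ++ e :: R) k)
    (hd : dd E (insert e P.toFinset) ≤ dd E P.toFinset) :
    WidthLE E (P ++ e :: (Q ++ R)) k := by
  intro i
  rcases List.toFinset_take_eq_or_eq_insert P Q R e i with ⟨j, hj⟩ | ⟨j, hPj, hj⟩
  · rw [hj]
    exact hw j
  · rw [hj]
    exact (dd_insert_le_of_subset hPj hd).trans (hw j)

/-- Moving an edge e with d(F ∪ {e}) ≤ d(F) forward to just after the prefix P
(with F = P.toFinset) preserves width at most k. -/
theorem stmt13 (E : Finset (Sym2 V)) (k : ℕ) (P Q R : List (Sym2 V)) (e : Sym2 V)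
    (hL : IsLayout E (P ++ Q ++ e :: R))
    (hw : WidthLE E (P ++ Q ++ e :: R) k)
    (hd : dd E (insert e P.toFinset) ≤ dd E P.toFinset) :
    WidthLE E (P ++ e :: (Q ++ R)) k :=
  stmt13_general E k P Q R e hw hd
end
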